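/- arXiv:1212.4532 — 6 statements merged into one kernel-verified Lean document; each statement's English description precedes it below -/
import Mathlib

section
/- Let D be a division ring with center F and let a be a non-central element of D that is torsion in the multiplicative group D^*. Then there exists a division subring D₁ of D that contains a, such that D₁ is finite-dimensional over its own center and a is not in the center of D₁. -/
/-!
Let `n` be the order of `a`. It is invertible in `D`: in characteristic `p`, if `p ∣ n` then
`u = a ^ (n / p)` has order `p`, yet `(u - 1) ^ p = u ^ p - 1 = 0` forces `u = 1`.
The averages `∑ k < n, a ^ (k * c) * x * a⁻¹ ^ k` split `n • x` into pieces `u` with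
`u * a = a ^ c * u`; if `x` does not commute with `a`, one of them is a nonzero `b` with
`b * a = a ^ c * b` and `a ^ c ≠ a` (Herstein). Conjugation by `b` moves `a` among its finitely
many powers, so `z = b ^ m` commutes with `a` for some `m > 0`. Let `K` be the center of the
centralizer of `z`. The subring generated by `K`, `a` and `b` is spanned over `K` by the
`a ^ i * b ^ j` with `i < n`, `j < m`, and `K` is central in it. Being a domain finite-dimensional
over the division ring `K`, it is a division ring, finite over its center, and `b` shows that `a`
is not central in it.
-/

/-- A non-central element `x` of a division ring `D` is a Kurosh element if there is a
division subring `D₁` of `D` containing `x` such that `x` is non-central in `D₁` and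
`D₁` is finite-dimensional over its own center. -/
def IsKurosh {D : Type*} [DivisionRing D] (x : D) : Prop :=
  ∃ D₁ : Subring D, (∀ y ∈ D₁, y⁻¹ ∈ D₁) ∧
    ∃ hx : x ∈ D₁, (⟨x, hx⟩ : D₁) ∉ Subring.center D₁ ∧
      Module.Finite (Subring.center D₁) D₁

open Finset

section

variable {D : Type*} [DivisionRing D]

theorem natCast_orderOf_ne_zero {a : D} (ha : IsOfFinOrder a) : (orderOf a : D) ≠ 0 := by
  intro h
  obtain ⟨p, _⟩ := CharP.exists D
  have hp : p ∣ orderOf a := (CharP.cast_eq_zero_iff D p _).1 h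
  rcases CharP.char_is_prime_or_zero D p with hpp | rfl
  · have := Fact.mk hpp
    set u := a ^ (orderOf a / p)
    have hu : orderOf u = p := orderOf_pow_orderOf_div ha.orderOf_pos.ne' hp
    have hu1 : u = 1 := by
      rw [← sub_eq_zero]
      apply eq_zero_of_pow_eq_zero (n := p)
      rw [sub_pow_char_of_commute p (Commute.one_right _), one_pow, ← hu, pow_orderOf_eq_one,
        sub_self]
    exact hpp.one_lt.ne' (by rw [← hu, hu1, orderOf_one])
  · exact ha.orderOf_pos.ne' (Nat.eq_zero_of_zero_dvd hp)

/-- Up to the factor `orderOf a`, `twistedConjSum a c` projects onto `{u | u * a = a ^ c * u}`. -/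
noncomputable def twistedConjSum (a : D) (c : ℕ) (x : D) : D :=
  ∑ k ∈ range (orderOf a), a ^ (k * c) * x * a⁻¹ ^ k

theorem twistedConjSum_mul {a : D} (ha : a ≠ 0) (c : ℕ) (x : D) :
    twistedConjSum a c x * a = a ^ c * twistedConjSum a c x := by
  set f : ℕ → D := fun k => a ^ (k * c) * x * a⁻¹ ^ k
  have hstep : ∀ k, a ^ c * f k = f (k + 1) * a := fun k => by
    simp only [f, pow_succ, mul_assoc, inv_mul_cancel₀ ha, mul_one, add_mul, one_mul]
    rw [← mul_assoc, ← pow_add, add_comm]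
  have hperiod : f (orderOf a) = f 0 := by
    simp only [f, pow_mul, inv_pow, pow_orderOf_eq_one, one_pow, inv_one, pow_zero]
  have hshift : ∑ k ∈ range (orderOf a), f (k + 1) = ∑ k ∈ range (orderOf a), f k := by
    have := (sum_range_succ' f (orderOf a)).symm.trans (sum_range_succ f (orderOf a))
    rwa [hperiod, add_left_inj] at this
  change (∑ k ∈ range (orderOf a), f k) * a = a ^ c * ∑ k ∈ range (orderOf a), f k
  rw [mul_sum, sum_congr rfl fun k _ => hstep k, ← sum_mul, hshift]

theorem sum_twistedConjSum (a x : D) :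
    ∑ c ∈ range (orderOf a), twistedConjSum a c x = orderOf a * x := by
  simp only [twistedConjSum]
  rw [sum_comm]
  simp only [pow_mul, ← sum_mul]
  rw [sum_eq_single 0]
  · simp
  · intro k hk hk0
    have hk1 : a ^ k ≠ 1 := pow_ne_one_of_lt_orderOf hk0 (mem_range.1 hk)
    rw [geom_sum_eq hk1, ← pow_mul, mul_comm, pow_mul, pow_orderOf_eq_one, one_pow, sub_self,
      zero_div, zero_mul, zero_mul]
  · intro h
    rw [mem_range, not_lt, Nat.le_zero] at h
    simp [h]

theorem exists_mul_eq_pow_mul_of_mul_ne {a x : D} (hn : (orderOf a : D) ≠ 0)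
    (hx : a * x ≠ x * a) : ∃ b ≠ 0, ∃ c : ℕ, b * a = a ^ c * b ∧ a ^ c ≠ a := by
  have ha : a ≠ 0 := by
    rintro rfl
    simp at hn
  by_contra! h
  have hcomm : ∀ c, twistedConjSum a c x * a = a * twistedConjSum a c x := fun c => by
    by_cases hu : twistedConjSum a c x = 0
    · simp [hu]
    · rw [twistedConjSum_mul ha, h _ hu c (twistedConjSum_mul ha c x)]
  have hnx : (orderOf a : D) * x * a = a * ((orderOf a : D) * x) := by
    rw [← sum_twistedConjSum, sum_mul, mul_sum]
    exact sum_congr rfl fun c _ => hcomm c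
  refine hx (mul_left_cancel₀ hn ?_)
  rw [← mul_assoc, (Nat.cast_commute _ a).eq, mul_assoc, ← hnx, mul_assoc]

theorem exists_pow_commute_of_mul_eq_pow_mul {a b : D} (ha : IsOfFinOrder a) (hb : b ≠ 0)
    {c : ℕ} (hba : b * a = a ^ c * b) : ∃ m, 0 < m ∧ Commute (b ^ m) a := by
  have hconj : ∀ j, b ^ j * a = a ^ c ^ j * b ^ j := by
    intro j
    induction j with
    | zero => simp
    | succ j ih =>
      have := (SemiconjBy.pow_right hba (c ^ j)).mul_left ih
      rwa [← pow_succ', ← pow_mul, ← pow_succ'] at this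
  obtain ⟨j, j', hjj', heq⟩ := ha.finite_powers.exists_lt_map_eq_of_forall_mem
    (f := fun j => a ^ c ^ j) fun j => (Submonoid.mem_powers_iff _ _).2 ⟨c ^ j, rfl⟩
  obtain ⟨m, rfl⟩ := Nat.exists_eq_add_of_lt hjj'
  rw [add_assoc] at heq
  refine ⟨m + 1, m.succ_pos, mul_left_cancel₀ (pow_ne_zero j hb) ?_⟩
  calc b ^ j * (b ^ (m + 1) * a) = a ^ c ^ j * b ^ j * b ^ (m + 1) := by
        rw [← mul_assoc, ← pow_add, hconj, ← heq, pow_add, mul_assoc]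
    _ = b ^ j * (a * b ^ (m + 1)) := by rw [← hconj, mul_assoc]

def Subfield.centralizer (s : Set D) : Subfield D where
  toSubring := Subring.centralizer s
  inv_mem' _ := Set.inv_mem_centralizer₀

theorem Subfield.mem_centralizer_iff {s : Set D} {x : D} :
    x ∈ Subfield.centralizer s ↔ ∀ g ∈ s, g * x = x * g :=
  Iff.rfl

open Submodule

section SpanOverSubfield

variable {K : Subfield D} {S : Set D} {R : Subring D}

theorem mul_mem_span_of_commute {g : D} (hg : ∀ k ∈ K, Commute k g)
    (hgS : ∀ s ∈ S, g * s ∈ span K S) {x : D} (hx : x ∈ span K S) : g * x ∈ span K S := by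
  induction hx using span_induction with
  | mem s hs => exact hgS s hs
  | zero => simp
  | add x y _ _ hx hy => simpa [mul_add] using add_mem hx hy
  | smul k x _ hx =>
    change g * (k * x) ∈ _
    rw [← mul_assoc, ← (hg k k.2).eq, mul_assoc]
    exact smul_mem _ k hx

theorem Subring.inv_mem_of_coe_span_eq (hS : S.Finite) (hR : (span K S : Set D) = R) {y : D}
    (hy : y ∈ R) : y⁻¹ ∈ R := by
  rcases eq_or_ne y 0 with rfl | hy0
  · simp
  have hV : ∀ x, x ∈ span K S ↔ x ∈ R := fun x => Set.ext_iff.1 hR x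
  have := FiniteDimensional.span_of_finite K hS
  let μ : span K S →ₗ[K] span K S :=
    (LinearMap.mulRight K y).restrict fun x hx => (hV _).2 (R.mul_mem ((hV x).1 hx) hy)
  have hμ : Function.Injective μ := fun u v huv =>
    Subtype.ext (mul_right_cancel₀ hy0 (congrArg Subtype.val huv))
  obtain ⟨w, hw⟩ := LinearMap.injective_iff_surjective.1 hμ ⟨1, (hV 1).2 R.one_mem⟩
  rw [inv_eq_of_mul_eq_one_left (congrArg Subtype.val hw)]
  exact (hV w).1 w.2

theorem Subring.finite_center_of_coe_span_eq (hS : S.Finite) (hR : (span K S : Set D) = R)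
    (hK : ∀ k ∈ K, ∀ r ∈ R, Commute k r) : Module.Finite (Subring.center R) R := by
  have hV : ∀ x, x ∈ span K S ↔ x ∈ R := fun x => Set.ext_iff.1 hR x
  have hKR : ∀ k ∈ K, k ∈ R := fun k hk => by
    rw [← mul_one k]
    exact (hV _).1 (smul_mem _ (⟨k, hk⟩ : K) ((hV 1).2 R.one_mem))
  let ι : K → Subring.center R := fun k =>
    ⟨⟨k, hKR k k.2⟩, Subring.mem_center_iff.2 fun r => Subtype.ext (hK k k.2 r r.2).eq.symm⟩
  refine Module.finite_def.2 (fg_def.2 ⟨Subtype.val ⁻¹' S,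
    hS.preimage Subtype.val_injective.injOn, eq_top_iff.2 fun x _ => ?_⟩)
  suffices ∀ y (hy : y ∈ span K S),
      ⟨y, (hV y).1 hy⟩ ∈ span (Subring.center R) (Subtype.val ⁻¹' S) from
    this x ((hV x).2 x.2)
  intro y hy
  induction hy using span_induction with
  | mem y hy => exact subset_span hy
  | zero => exact zero_mem _
  | add y z _ _ hy hz => exact add_mem hy hz
  | smul k y _ hy => exact smul_mem _ (ι k) hy

end SpanOverSubfield

def monomials (a b : D) (m : ℕ) : Set D :=
  Set.image2 (fun i j => a ^ i * b ^ j) (Set.Iio (orderOf a)) (Set.Iio m)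

theorem monomials_finite (a b : D) (m : ℕ) : (monomials a b m).Finite :=
  (Set.finite_Iio _).image2 _ (Set.finite_Iio _)

theorem pow_mul_pow_mem_span_monomials {K : Subfield D} {a b : D} {m : ℕ} (ha : IsOfFinOrder a)
    (hm : 0 < m) (hbm : b ^ m ∈ K) (hbma : Commute (b ^ m) a) (s t : ℕ) :
    a ^ s * b ^ t ∈ span K (monomials a b m) := by
  have hmono : a ^ (s % orderOf a) * b ^ (t % m) ∈ span K (monomials a b m) :=
    subset_span ⟨_, Nat.mod_lt _ ha.orderOf_pos, _, Nat.mod_lt _ hm, rfl⟩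
  have hz : Commute ((b ^ m) ^ (t / m)) (a ^ (s % orderOf a) * b ^ (t % m)) :=
    (hbma.pow_pow _ _).mul_right ((Commute.pow_pow_self b _ _).pow_left _)
  rw [← pow_mod_orderOf a s, ← Nat.mod_add_div t m, pow_add, pow_mul, ← mul_assoc, ← hz.eq]
  exact smul_mem _ (⟨_, pow_mem hbm _⟩ : K) hmono

theorem coe_span_monomials_eq_closure {K : Subfield D} {a b : D} {m c : ℕ} (ha : IsOfFinOrder a)
    (hm : 0 < m) (hbm : b ^ m ∈ K) (hKa : ∀ k ∈ K, Commute k a)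
    (hKb : ∀ k ∈ K, Commute k b) (hba : b * a = a ^ c * b) :
    (span K (monomials a b m) : Set D) = Subring.closure ((K : Set D) ∪ {a, b}) := by
  have hmono := pow_mul_pow_mem_span_monomials ha hm hbm (hKa _ hbm)
  apply subset_antisymm
  · intro x hx
    induction hx using span_induction with
    | mem x hx =>
      obtain ⟨i, -, j, -, rfl⟩ := hx
      exact mul_mem (pow_mem (Subring.subset_closure (by simp)) i)
        (pow_mem (Subring.subset_closure (by simp)) j)
    | zero => exact zero_mem _
    | add x y _ _ hx hy => exact add_mem hx hy
    | smul k x _ hx => exact mul_mem (Subring.subset_closure (Or.inl k.2)) hx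
  · intro x hx
    suffices ∀ y ∈ span K (monomials a b m), x * y ∈ span K (monomials a b m) by
      simpa using this 1 (by simpa using hmono 0 0)
    induction hx using Subring.closure_induction with
    | mem x hx =>
      rcases hx with hk | rfl | rfl
      · exact fun y hy => smul_mem _ (⟨x, hk⟩ : K) hy
      · refine fun y => mul_mem_span_of_commute hKa ?_
        rintro _ ⟨i, -, j, -, rfl⟩
        rw [← mul_assoc, ← pow_succ']
        exact hmono _ _
      · refine fun y => mul_mem_span_of_commute hKb ?_
        rintro _ ⟨i, -, j, -, rfl⟩
        rw [← mul_assoc, (SemiconjBy.pow_right hba i).eq, mul_assoc, ← pow_succ', ← pow_mul]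
        exact hmono _ _
    | zero => simp
    | one => simp
    | add x y _ _ hx hy => exact fun z hz => by simpa [add_mul] using add_mem (hx z hz) (hy z hz)
    | neg x _ hx => exact fun z hz => by simpa using neg_mem (hx z hz)
    | mul x y _ _ hx hy => exact fun z hz => by simpa [mul_assoc] using hx _ (hy z hz)

theorem isKurosh_of_mul_eq_pow_mul {a b : D} (ha : IsOfFinOrder a) (hb : b ≠ 0) {c : ℕ}
    (hba : b * a = a ^ c * b) (hc : a ^ c ≠ a) : IsKurosh a := by
  obtain ⟨m, hm, hbma⟩ := exists_pow_commute_of_mul_eq_pow_mul ha hb hba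
  set K := Subfield.centralizer (Set.centralizer {b ^ m})
  have hKcomm : ∀ k ∈ K, ∀ x ∈ Set.centralizer {b ^ m}, Commute k x := fun k hk x hx =>
    (Subfield.mem_centralizer_iff.1 hk x hx).symm
  have hgen : (K : Set D) ∪ {a, b} ⊆ Set.centralizer {b ^ m} := by
    rintro x (hx | rfl | rfl) _ rfl
    · exact hx _ fun _ h => by rw [h]
    · exact hbma
    · exact pow_mul_comm' x m
  have hbmK : b ^ m ∈ K := fun x hx => (hx _ rfl).symm
  have hspan := coe_span_monomials_eq_closure ha hm hbmK
    (fun k hk => hKcomm k hk a (hgen (by simp))) (fun k hk => hKcomm k hk b (hgen (by simp))) hba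
  refine ⟨_, fun y => Subring.inv_mem_of_coe_span_eq (monomials_finite a b m) hspan,
    Subring.subset_closure (by simp), fun hcen => hc ?_,
    Subring.finite_center_of_coe_span_eq (monomials_finite a b m) hspan
      fun k hk r hr => hKcomm k hk r (Subring.closure_le (t := Subring.centralizer _).2 hgen hr)⟩
  have hab := congrArg Subtype.val
    (Subring.mem_center_iff.1 hcen ⟨b, Subring.subset_closure (by simp)⟩)
  exact mul_right_cancel₀ hb (hba.symm.trans hab)

end

/-- Every non-central torsion element of a division ring is a Kurosh element. -/
theorem stmt_4 (D : Type*) [DivisionRing D] (a : D)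
    (ha : a ∉ Subring.center D) (htor : ∃ n : ℕ, 0 < n ∧ a ^ n = 1) :
    IsKurosh a := by
  have hfin : IsOfFinOrder a := isOfFinOrder_iff_pow_eq_one.2 htor
  obtain ⟨x, hx⟩ : ∃ x, a * x ≠ x * a := by
    by_contra! h
    exact ha (Subring.mem_center_iff.2 fun x => (h x).symm)
  obtain ⟨b, hb, c, hba, hc⟩ :=
    exists_mul_eq_pow_mul_of_mul_ne (natCast_orderOf_ne_zero hfin) hx
  exact isKurosh_of_mul_eq_pow_mul hfin hb hba hc
end

section
/- Let D be a division ring whose center F has characteristic different from 2, and let a ∈ D \ F satisfy a² ∈ F. Then a is a Kurosh element: there exists a division subring D₁ of D containing a, finite-dimensional over its center, with a not central in D₁. -/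
/-!
If `u` does not commute with `a`, then `b = a u - u a` is nonzero and anticommutes with `a`
because `a²` is central; as the characteristic is not `2`, `a` and `b` do not commute.
The squares `a²`, `b²` commute with `a` and `b`, so they lie in the center `K` of the double
centralizer `E` of `{a, b}`, and `a, b` generate a quaternion algebra `(a², b²)_K` inside `E`.
Its image `D₁` in `D` is finite-dimensional over the field `K`, whose image is central in `D₁`.
So every nonzero element of `D₁` is integral over `K`, hence invertible in `D₁`, and `D₁` is
finite over its own center; `a` is not central in `D₁` because `b ∈ D₁`.
-/

theorem ringChar_center (D : Type*) [DivisionRing D] :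
    ringChar (Subring.center D) = ringChar D :=
  ringChar.eq_iff.2 <| ((Subring.center D).subtype.charP_iff_charP _).2 (ringChar.charP D)

theorem Module.Finite.center_of_finite (K R : Type*) [CommRing K] [Ring R] [Algebra K R]
    [Module.Finite K R] : Module.Finite (Subring.center R) R :=
  let σ : K →+* Subring.center R := (algebraMap K R).codRestrict _ fun c =>
    Subring.mem_center_iff.2 fun y => (Algebra.commutes c y).symm
  Module.Finite.of_surjective (σ := σ)
    { toFun := id, map_add' := fun _ _ => rfl, map_smul' := fun c x => Algebra.smul_def c x }
    Function.surjective_id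

theorem Subring.inv_mem_of_finite {D : Type*} [DivisionRing D] (K : Type*) [Field K]
    (D₁ : Subring D) [Algebra K D₁] [Module.Finite K D₁] {y : D} (hy : y ∈ D₁) : y⁻¹ ∈ D₁ := by
  obtain rfl | hy0 := eq_or_ne y 0
  · simp
  have hunit : IsUnit (⟨y, hy⟩ : D₁) :=
    (Algebra.IsIntegral.isIntegral (R := K) _).isUnit (Subtype.coe_ne_coe.1 hy0)
  obtain ⟨z, hz⟩ := hunit.exists_right_inv
  rw [inv_eq_of_mul_eq_one_right (congrArg Subtype.val hz)]
  exact z.2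

theorem isKurosh_of_mem_range {D B : Type*} [DivisionRing D] [Ring B] (K : Type*) [Field K]
    [Algebra K B] [Module.Finite K B] (f : B →+* D) {x y : D} (hx : x ∈ f.range)
    (hy : y ∈ f.range) (hxy : x * y ≠ y * x) : IsKurosh x := by
  let _ : Algebra K f.range := (f.rangeRestrict.comp (algebraMap K B)).toAlgebra' fun c z => by
    obtain ⟨w, rfl⟩ := f.rangeRestrict_surjective z
    simp only [RingHom.comp_apply, ← map_mul, Algebra.commutes]
  let g : B →ₐ[K] f.range := { f.rangeRestrict with commutes' := fun _ => rfl }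
  have : Module.Finite K f.range := .of_surjective g.toLinearMap f.rangeRestrict_surjective
  refine ⟨f.range, fun z hz => f.range.inv_mem_of_finite K hz, hx, fun hcen => hxy ?_,
    .center_of_finite K _⟩
  exact congrArg Subtype.val (Subring.mem_center_iff.1 hcen ⟨y, hy⟩).symm

theorem commute_sq_of_mul_eq_neg_mul {R : Type*} [Ring R] {a b : R} (h : b * a = -(a * b)) :
    Commute (a ^ 2) b := by
  have : b * (a * a) = a * a * b := by
    rw [← mul_assoc, h, neg_mul, mul_assoc, h, mul_neg, neg_neg, mul_assoc]
  rw [Commute, SemiconjBy, sq, this]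

theorem exists_mul_eq_neg_mul_of_sq_mem_center {D : Type*} [Ring D] {a : D}
    (ha : a ∉ Subring.center D) (ha2 : a ^ 2 ∈ Subring.center D) :
    ∃ b : D, b ≠ 0 ∧ b * a = -(a * b) := by
  obtain ⟨u, hu⟩ : ∃ u, u * a ≠ a * u := by
    simpa [Subring.mem_center_iff] using ha
  have hcomm : u * (a * a) = a * a * u := by
    rw [← sq]; exact Subring.mem_center_iff.1 ha2 u
  refine ⟨a * u - u * a, sub_ne_zero.2 (Ne.symm hu), ?_⟩
  calc (a * u - u * a) * a = a * u * a - a * a * u := by rw [sub_mul, mul_assoc u, hcomm]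
    _ = -(a * (a * u - u * a)) := by rw [mul_sub, ← mul_assoc, ← mul_assoc, neg_sub]

theorem mul_ne_mul_of_mul_eq_neg_mul {D : Type*} [Ring D] [IsDomain D]
    (hD : ringChar D ≠ 2) {a b : D} (ha : a ≠ 0) (hb : b ≠ 0) (h : b * a = -(a * b)) :
    a * b ≠ b * a := fun heq =>
  mul_ne_zero ha hb <| (Ring.eq_self_iff_eq_zero_of_char_ne_two hD).1 (h.symm.trans heq.symm)

namespace QuaternionAlgebra.Basis

variable {R A : Type*} [CommRing R] [Ring A] [Algebra R A] {c₁ c₂ c₃ : R}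

def ofMulEqNegMul {i j : A} (hi : i * i = algebraMap R A c₁)
    (hj : j * j = algebraMap R A c₂) (hji : j * i = -(i * j)) : Basis A c₁ 0 c₂ where
  i := i
  j := j
  k := i * j
  i_mul_i := by rw [hi, zero_smul, add_zero, Algebra.algebraMap_eq_smul_one]
  j_mul_j := by rw [hj, Algebra.algebraMap_eq_smul_one]
  i_mul_j := rfl
  j_mul_i := by rw [hji, zero_smul, zero_sub]

theorem i_mem_range (q : Basis A c₁ c₂ c₃) : q.i ∈ q.liftHom.range :=
  ⟨⟨0, 1, 0, 0⟩, by simp [liftHom, lift]⟩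

theorem j_mem_range (q : Basis A c₁ c₂ c₃) : q.j ∈ q.liftHom.range :=
  ⟨⟨0, 0, 1, 0⟩, by simp [liftHom, lift]⟩

end QuaternionAlgebra.Basis

theorem isKurosh_of_mul_eq_neg_mul {D : Type*} [DivisionRing D] {a b : D} (hab : a * b ≠ b * a)
    (hba : b * a = -(a * b)) : IsKurosh a := by
  let C : Set D := Set.centralizer {a, b}
  let E : Subfield D := (Subring.centralizer C).toSubfield fun _ => Set.inv_mem_centralizer₀
  have hCE : ∀ z ∈ C, ∀ hz : z ∈ E, (⟨z, hz⟩ : E) ∈ Subring.center E := fun z hz _ =>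
    Subring.mem_center_iff.2 fun w => Subtype.ext (w.2 z hz).symm
  have haE : a ∈ E := Set.subset_centralizer_centralizer (by simp)
  have hbE : b ∈ E := Set.subset_centralizer_centralizer (by simp)
  have haC : a ^ 2 ∈ C := by
    rintro g (rfl | rfl)
    · exact (Commute.self_pow g 2).eq
    · exact (commute_sq_of_mul_eq_neg_mul hba).eq.symm
  have hbC : b ^ 2 ∈ C := by
    rintro g (rfl | rfl)
    · exact (commute_sq_of_mul_eq_neg_mul (neg_eq_iff_eq_neg.1 hba.symm)).eq.symm
    · exact (Commute.self_pow g 2).eq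
  let K := Subring.center E
  let q : QuaternionAlgebra.Basis E (⟨⟨a ^ 2, pow_mem haE 2⟩, hCE _ haC _⟩ : K) 0
      (⟨⟨b ^ 2, pow_mem hbE 2⟩, hCE _ hbC _⟩ : K) :=
    .ofMulEqNegMul (i := ⟨a, haE⟩) (j := ⟨b, hbE⟩) (Subtype.ext (sq a).symm)
      (Subtype.ext (sq b).symm) (Subtype.ext hba)
  obtain ⟨u, hu⟩ := q.i_mem_range
  obtain ⟨v, hv⟩ := q.j_mem_range
  exact isKurosh_of_mem_range K (E.subtype.comp q.liftHom.toRingHom)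
    ⟨u, congrArg Subtype.val hu⟩ ⟨v, congrArg Subtype.val hv⟩ hab

/-- Let `D` be a division ring whose center `F` has characteristic different from `2`,
and let `a ∈ D \ F` satisfy `a² ∈ F`. Then `a` is a Kurosh element. -/
theorem stmt_5 (D : Type*) [DivisionRing D]
    (hchar : ringChar (Subring.center D) ≠ 2)
    (a : D) (ha : a ∉ Subring.center D) (ha2 : a ^ 2 ∈ Subring.center D) :
    IsKurosh a := by
  rw [ringChar_center] at hchar
  have ha0 : a ≠ 0 := fun h => ha (h ▸ zero_mem _)
  obtain ⟨b, hb0, hba⟩ := exists_mul_eq_neg_mul_of_sq_mem_center ha ha2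
  exact isKurosh_of_mul_eq_neg_mul (mul_ne_mul_of_mul_eq_neg_mul hchar ha0 hb0 hba) hba
end

section
/- Let D be a division ring with center F and let N be a normal subgroup of D^* which is abelian. Then N ⊆ F. -/
/-!
Hua's trick. Fix `a ∈ N` and `x ∈ D`. The conjugates `c = x a x⁻¹` and `e = (x + 1) a (x + 1)⁻¹`
lie in `N`, so they commute with `a`. Subtracting `x a = c x` from `(x + 1) a = e (x + 1)` gives
`(c - e) x = e - a`. If `c = e` then `e = a`, so `a` commutes with `x + 1`; otherwise
`x = (c - e)⁻¹ (e - a)` is built from elements commuting with `a`.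
-/

theorem commute_of_semiconjBy_of_semiconjBy_add_one {D : Type*} [DivisionRing D] {a c e x : D}
    (hc : Commute a c) (he : Commute a e) (hxc : SemiconjBy x a c)
    (hxe : SemiconjBy (x + 1) a e) : Commute a x := by
  have key : (c - e) * x = e - a := by
    unfold SemiconjBy at hxc hxe
    rw [add_mul, mul_add, one_mul, mul_one] at hxe
    rw [sub_mul, ← hxc, sub_eq_sub_iff_add_eq_add, hxe, add_comm]
  by_cases hce : c = e
  · have hea : e = a := by
      rw [hce, sub_self, zero_mul] at key
      exact sub_eq_zero.mp key.symm
    subst hea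
    simpa using Commute.sub_right (Commute.symm hxe) (Commute.one_right e)
  · have hx : x = (c - e)⁻¹ * (e - a) := by
      rw [← key, inv_mul_cancel_left₀ (sub_ne_zero.mpr hce)]
    rw [hx]
    exact (hc.sub_right he).inv_right₀.mul_right (he.sub_right (Commute.refl a))

theorem exists_commute_semiconjBy_of_mem {M₀ : Type*} [GroupWithZero M₀] {N : Subgroup M₀ˣ}
    [N.Normal] (hN : ∀ a ∈ N, ∀ b ∈ N, a * b = b * a) {a : M₀ˣ} (ha : a ∈ N) (y : M₀) :
    ∃ c, Commute (a : M₀) c ∧ SemiconjBy y a c := by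
  rcases eq_or_ne y 0 with rfl | hy
  · exact ⟨a, Commute.refl _, SemiconjBy.zero_left _ _⟩
  · let u := Units.mk0 y hy
    refine ⟨↑(u * a * u⁻¹), ?_, ?_⟩
    · exact Commute.units_val (hN a ha _ (‹N.Normal›.conj_mem a ha u))
    · exact Units.mk_semiconjBy u a

/-- Let `D` be a division ring with center `F` and `N` an abelian normal subgroup of
`D^*`. Then `N ⊆ F`. -/
theorem stmt_14 (D : Type*) [DivisionRing D]
    (N : Subgroup Dˣ) [N.Normal]
    (hab : ∀ a ∈ N, ∀ b ∈ N, a * b = b * a) :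
    ∀ a ∈ N, ((a : Dˣ) : D) ∈ Subring.center D := by
  intro a ha
  rw [Subring.mem_center_iff]
  intro x
  obtain ⟨c, hac, hxc⟩ := exists_commute_semiconjBy_of_mem hab ha x
  obtain ⟨e, hae, hxe⟩ := exists_commute_semiconjBy_of_mem hab ha (x + 1)
  exact (commute_of_semiconjBy_of_semiconjBy_add_one hac hae hxc hxe).eq.symm
end

section
/- Let D be a division ring with center F and let a ∈ D be such that x*a*x⁻¹*a⁻¹ ∈ F for all x ∈ D^*. Then a ∈ F. -/
/-- Let `D` be a division ring with center `F` and `a ∈ D` such that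
`x * a * x⁻¹ * a⁻¹ ∈ F` for all nonzero `x ∈ D`. Then `a ∈ F`. -/
theorem stmt_15 (D : Type*) [DivisionRing D] (a : D)
    (h : ∀ x : D, x ≠ 0 → x * a * x⁻¹ * a⁻¹ ∈ Subring.center D) :
    a ∈ Subring.center D := by
  rw [Subring.mem_center_iff]
  intro g
  by_cases ha : a = 0
  · simp [ha]
  by_cases hg : g = 0
  · simp [hg]
  by_cases hg1 : g = -1
  · simp [hg1]
  have hgadd : g + 1 ≠ 0 := fun H => hg1 (eq_neg_of_add_eq_zero_left H)
  set c : D := g * a * g⁻¹ * a⁻¹ with hc_def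
  set c' : D := (g + 1) * a * (g + 1)⁻¹ * a⁻¹ with hc'_def
  have hc : c ∈ Subring.center D := h g hg
  have hc' : c' ∈ Subring.center D := h (g + 1) hgadd
  have e1 : g * a = c * a * g := by
    have h1 : c * a = g * a * g⁻¹ := by
      rw [hc_def, mul_assoc, inv_mul_cancel₀ ha, mul_one]
    rw [h1, mul_assoc, inv_mul_cancel₀ hg, mul_one]
  have e2 : (g + 1) * a = c' * a * (g + 1) := by
    have h1 : c' * a = (g + 1) * a * (g + 1)⁻¹ := by
      rw [hc'_def, mul_assoc, inv_mul_cancel₀ ha, mul_one]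
    rw [h1, mul_assoc, inv_mul_cancel₀ hgadd, mul_one]
  have h2 : c * a * g + a = c' * a * g + c' * a := by
    rw [← e1]
    rw [add_mul, one_mul] at e2
    rw [mul_add, mul_one] at e2
    exact e2
  have key : (c - c') * (a * g) = (c' - 1) * a := by
    rw [sub_mul, sub_mul, one_mul, ← mul_assoc, ← mul_assoc,
      sub_eq_sub_iff_add_eq_add]
    rw [add_comm (c' * a * g) (c' * a)] at h2
    exact h2
  by_cases hcc : c = c'
  · have h0 : (c' - 1) * a = 0 := by rw [← key, hcc, sub_self, zero_mul]
    have h1 : c' = 1 := by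
      rcases mul_eq_zero.mp h0 with h' | h'
      · exact sub_eq_zero.mp h'
      · exact absurd h' ha
    rw [e1, hcc, h1, one_mul]
  · have hsub : c - c' ≠ 0 := sub_ne_zero.mpr hcc
    have hco1 : Commute a c := Subring.mem_center_iff.mp hc a
    have hco2 : Commute a c' := Subring.mem_center_iff.mp hc' a
    set k : D := (c - c')⁻¹ * ((c' - 1) * a) with hk_def
    have hag : a * g = (c - c')⁻¹ * ((c' - 1) * a) := by
      rw [← key, ← mul_assoc, inv_mul_cancel₀ hsub, one_mul]
    have hk : Commute a ((c - c')⁻¹ * (c' - 1)) :=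
      ((hco1.sub_right hco2).inv_right₀).mul_right (hco2.sub_right (Commute.one_right a))
    have hag' : a * g = a * ((c - c')⁻¹ * (c' - 1)) := by
      rw [hag, hk, mul_assoc]
    have hgk : g = (c - c')⁻¹ * (c' - 1) := mul_left_cancel₀ ha hag'
    rw [hgk]
    exact hk.symm
end

section
/- Let D be a division ring with center F, K a proper division subring of D, and N a normal subgroup of D^* that is radical over K and contains two elements a, b ∉ K with a + b ≠ 0, a ∉ {1, -1}, b ∉ {1, -1}. If (a+b)a(a+b)⁻¹ and (b+1)a(b+1)⁻¹ have equal m-th powers in K and a ≠ 1, then a^m commutes with b, where m is a common exponent. -/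
private lemma conj_pow_aux {D : Type*} [DivisionRing D] (u x : D) (hu : u ≠ 0) (m : ℕ) :
    (u * x * u⁻¹) ^ m = u * x ^ m * u⁻¹ := by
  induction m with
  | zero => simp [mul_inv_cancel₀ hu]
  | succ n ih =>
      rw [pow_succ, pow_succ, ih]
      rw [show u * x ^ n * u⁻¹ * (u * x * u⁻¹) = u * x ^ n * (u⁻¹ * u) * x * u⁻¹ by
        simp [mul_assoc], inv_mul_cancel₀ hu]
      simp [mul_assoc]

/-- Key computation of Lemma 3.3: in the setting where `D` is a division ring, `K` a
proper division subring, `N ⊴ D^*` radical over `K`, and `a, b ∈ N` with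
`a, b ∉ K`, `a + b ≠ 0`, `a, b ∉ {1, -1}`: if `x = (a+b)a(a+b)⁻¹` and
`y = (b+1)a(b+1)⁻¹` have equal `m`-th powers lying in `K`, then `a^m` commutes
with `b`. -/
theorem stmt_16 (D : Type*) [DivisionRing D]
    (K : Subring D) (hKdiv : ∀ x ∈ K, x⁻¹ ∈ K) (hKne : K ≠ ⊤)
    (N : Subgroup Dˣ) [N.Normal]
    (hrad : ∀ u ∈ N, ∃ n : ℕ, 0 < n ∧ ((u : Dˣ) : D) ^ n ∈ K)
    (a b : Dˣ) (haN : a ∈ N) (hbN : b ∈ N)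
    (haK : ((a : Dˣ) : D) ∉ K) (hbK : ((b : Dˣ) : D) ∉ K)
    (hab : ((a : Dˣ) : D) + ((b : Dˣ) : D) ≠ 0)
    (ha1 : ((a : Dˣ) : D) ≠ 1) (ham1 : ((a : Dˣ) : D) ≠ -1)
    (hb1 : ((b : Dˣ) : D) ≠ 1) (hbm1 : ((b : Dˣ) : D) ≠ -1)
    (m : ℕ) (hm : 0 < m)
    (hxK : ((((a : Dˣ) : D) + b) * a * (((a : Dˣ) : D) + b)⁻¹) ^ m ∈ K)
    (hyK : ((((b : Dˣ) : D) + 1) * a * (((b : Dˣ) : D) + 1)⁻¹) ^ m ∈ K)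
    (hxy : ((((a : Dˣ) : D) + b) * a * (((a : Dˣ) : D) + b)⁻¹) ^ m
         = ((((b : Dˣ) : D) + 1) * a * (((b : Dˣ) : D) + 1)⁻¹) ^ m) :
    ((a : Dˣ) : D) ^ m * b = ((b : Dˣ) : D) * ((a : Dˣ) : D) ^ m := by
  set A : D := (a : D)
  set B : D := (b : D)
  have hb1' : B + 1 ≠ 0 := by
    intro h
    exact hbm1 (eq_neg_of_add_eq_zero_left h)
  -- rewrite powers of conjugates
  rw [conj_pow_aux _ _ hab, conj_pow_aux _ _ hb1'] at hxy
  set c : D := A ^ m with hc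
  set k : D := (B + 1) * c * (B + 1)⁻¹ with hk
  have h1 : k * (A + B) = (A + B) * c := by
    calc k * (A + B)
        = ((A + B) * c * (A + B)⁻¹) * (A + B) := by rw [hxy]
      _ = (A + B) * c * ((A + B)⁻¹ * (A + B)) := by simp [mul_assoc]
      _ = (A + B) * c := by rw [inv_mul_cancel₀ hab, mul_one]
  have h2 : k * (B + 1) = (B + 1) * c := by
    calc (B + 1) * c * (B + 1)⁻¹ * (B + 1)
        = (B + 1) * c * ((B + 1)⁻¹ * (B + 1)) := by simp [mul_assoc]
      _ = (B + 1) * c := by rw [inv_mul_cancel₀ hb1', mul_one]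
  have hA1 : A - 1 ≠ 0 := sub_ne_zero.mpr ha1
  have hcomm : c * A = A * c := by
    simp [hc, ← pow_succ, ← pow_succ']
  have h3 : k * (A - 1) = c * (A - 1) := by
    have e1 : k * (A - 1) = k * (A + B) - k * (B + 1) := by noncomm_ring
    rw [e1, h1, h2]
    have e2 : c * (A - 1) = A * c - c := by rw [mul_sub, mul_one, ← hcomm]
    rw [e2]
    noncomm_ring
  have hkc : k = c := by
    have := mul_right_cancel₀ hA1 h3
    exact this
  have h4 : c * (B + 1) = (B + 1) * c := by
    rw [← hkc] at h2 ⊢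
    exact h2.symm ▸ h2
  have : c * B + c = B * c + c := by
    have := h4
    rw [mul_add, add_mul, mul_one, one_mul] at this
    exact this
  have := add_right_cancel this
  exact this
end

section
/- In the Mal'cev–Neumann division ring D = K((G)), where G = ⊕_{i≥1} ℤ ordered lexicographically acts on K = ℚ(√p₁, √p₂, ...) by g·√pᵢ = (-1)^{gᵢ}√pᵢ, the center of D equals ℚ((H)), where H = {g² : g ∈ G} is the subgroup of squares. -/
noncomputable section

/-- The subfield `K = ℚ(√p₀, √p₁, …)` of `ℝ` generated by the square roots of the
primes `p i`. -/
def sqrtField (p : ℕ → ℕ) : Subfield ℝ :=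
  Subfield.closure (Set.range fun i => Real.sqrt (p i))

/-- The underlying additive group of Mal'cev–Neumann series `K((G))`, where
`G = ⊕_{i≥1} ℤ` is ordered lexicographically: Hahn series over `Lex (ℕ →₀ ℤ)` with
coefficients in `K`. -/
abbrev MalcevNeumann (p : ℕ → ℕ) := HahnSeries (Lex (ℕ →₀ ℤ)) (sqrtField p)

/-- The twisted (crossed product) Mal'cev–Neumann multiplication
`(α · β)_g = ∑_{u + v = g} α_u · σ(u)(β_v)`, where `σ` is the action of `G` on `K`. -/
def tmul (p : ℕ → ℕ) (σ : (ℕ →₀ ℤ) → (sqrtField p →+* sqrtField p))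
    (α β : MalcevNeumann p) : MalcevNeumann p where
  coeff g := ∑ ij ∈ Finset.antidiagonal α.isPWO_support β.isPWO_support g,
      α.coeff ij.1 * σ (ofLex ij.1) (β.coeff ij.2)
  isPWO_support' := by
    apply (α.isPWO_support.add β.isPWO_support).mono
    intro g hg
    obtain ⟨ij, hij, -⟩ := Finset.exists_ne_zero_of_sum_ne_zero hg
    rw [Finset.mem_antidiagonal] at hij
    exact hij.2.2 ▸ Set.add_mem_add hij.1 hij.2.1

/-!
Comparing coefficients of `α · (c tʰ)` and `(c tʰ) · α` shows that `α` is central iff, for each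
`g` in its support, `σ g` is trivial on `K` and `α_g` is fixed by every `σ h`; conversely, these
two conditions turn the twisted product with `α`, on either side, into the ordinary commutative
Hahn series product.
Since the `√pᵢ` generate `K`, `σ g` is trivial iff every `gᵢ` is even. An element of `K` fixed by
every `σ h` is rational: write it as a `ℚ`-combination of monomials `∏ √pᵢ ^ kᵢ` in the primes of a
finite set `s`; summing over the `2 ^ #s` sign changes of those primes kills every monomial with an
odd exponent and multiplies the others, which are rational, by `2 ^ #s`.
-/

theorem Finsupp.even_iff_forall_even {ι : Type*} {g : ι →₀ ℤ} : Even g ↔ ∀ i, Even (g i) := by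
  refine ⟨fun ⟨h, hh⟩ i => ⟨h i, by simp [hh]⟩, fun hg => ⟨g.mapRange (· / 2) (by simp), ?_⟩⟩
  ext i
  obtain ⟨r, hr⟩ := hg i
  simp only [Finsupp.add_apply, Finsupp.mapRange_apply, hr]
  omega

section TwistedMul

variable {p : ℕ → ℕ} {σ : (ℕ →₀ ℤ) → (sqrtField p →+* sqrtField p)}

theorem coeff_tmul (α β : MalcevNeumann p) (g : Lex (ℕ →₀ ℤ)) :
    (tmul p σ α β).coeff g = ∑ uv ∈ Finset.antidiagonal α.isPWO_support β.isPWO_support g,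
      α.coeff uv.1 * σ (ofLex uv.1) (β.coeff uv.2) :=
  rfl

theorem tmul_eq_mul {α β : MalcevNeumann p}
    (h : ∀ u ∈ α.support, ∀ v ∈ β.support, σ (ofLex u) (β.coeff v) = β.coeff v) :
    tmul p σ α β = α * β := by
  ext g : 2
  rw [coeff_tmul, HahnSeries.coeff_mul]
  refine Finset.sum_congr rfl fun uv huv => ?_
  rw [Finset.mem_antidiagonal] at huv
  rw [h _ huv.1 _ huv.2.1]

theorem coeff_tmul_single_add (α : MalcevNeumann p) (g h : Lex (ℕ →₀ ℤ)) (c : sqrtField p) :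
    (tmul p σ α (HahnSeries.single h c)).coeff (g + h) = α.coeff g * σ (ofLex g) c := by
  rw [coeff_tmul, Finset.sum_eq_single (g, h)]
  · simp
  · intro uv huv hne
    rw [Finset.mem_antidiagonal] at huv
    obtain ⟨-, hv, huv⟩ := huv
    obtain rfl : uv.2 = h := HahnSeries.support_single_subset hv
    exact (hne (Prod.ext (add_right_cancel huv) rfl)).elim
  · intro hgh
    rw [Finset.mem_antidiagonal] at hgh
    by_contra hne
    exact hgh ⟨(HahnSeries.mem_support _ _).2 (left_ne_zero_of_mul hne),
      (HahnSeries.mem_support _ _).2 fun h0 => hne (by simp [h0]), rfl⟩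

theorem coeff_single_tmul_add (α : MalcevNeumann p) (g h : Lex (ℕ →₀ ℤ)) (c : sqrtField p) :
    (tmul p σ (HahnSeries.single h c) α).coeff (h + g) = c * σ (ofLex h) (α.coeff g) := by
  rw [coeff_tmul, Finset.sum_eq_single (h, g)]
  · simp
  · intro uv huv hne
    rw [Finset.mem_antidiagonal] at huv
    obtain ⟨hu, -, huv⟩ := huv
    obtain rfl : uv.1 = h := HahnSeries.support_single_subset hu
    exact (hne (Prod.ext rfl (add_left_cancel huv))).elim
  · intro hhg
    rw [Finset.mem_antidiagonal] at hhg
    by_contra hne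
    exact hhg ⟨(HahnSeries.mem_support _ _).2 (left_ne_zero_of_mul hne),
      (HahnSeries.mem_support _ _).2 fun h0 => hne (by simp [h0]), rfl⟩

theorem tmul_comm_iff (α : MalcevNeumann p) :
    (∀ β, tmul p σ α β = tmul p σ β α) ↔
      ∀ g ∈ α.support, σ (ofLex g) = RingHom.id _ ∧ ∀ h, σ h (α.coeff g) = α.coeff g := by
  constructor
  · intro hα g hg
    have key (h : Lex (ℕ →₀ ℤ)) (c : sqrtField p) :
        α.coeff g * σ (ofLex g) c = c * σ (ofLex h) (α.coeff g) := by
      rw [← coeff_tmul_single_add, ← coeff_single_tmul_add, hα, add_comm]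
    have hfix (h : ℕ →₀ ℤ) : σ h (α.coeff g) = α.coeff g := by
      simpa using (key (toLex h) 1).symm
    refine ⟨RingHom.ext fun c => mul_left_cancel₀ ((HahnSeries.mem_support _ _).1 hg) ?_, hfix⟩
    rw [key (toLex 0) c, ofLex_toLex, hfix, mul_comm, RingHom.id_apply]
  · intro hα β
    rw [tmul_eq_mul fun u hu _ _ => by rw [(hα u hu).1, RingHom.id_apply],
      tmul_eq_mul fun _ _ v hv => (hα v hv).2 _, mul_comm]

end TwistedMul

section SqrtField

variable (p : ℕ → ℕ)

def sqrtGen (i : ℕ) : sqrtField p :=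
  ⟨√(p i), Subfield.subset_closure ⟨i, rfl⟩⟩

theorem sqrtGen_sq (i : ℕ) : sqrtGen p i ^ 2 = p i :=
  Subtype.ext <| by simp [sqrtGen]

theorem sqrtGen_ne_zero {i : ℕ} (hi : p i ≠ 0) : sqrtGen p i ≠ 0 := by
  intro h
  simpa [h, eq_comm, hi] using sqrtGen_sq p i

theorem isIntegral_sqrtGen (i : ℕ) : IsIntegral ℚ (sqrtGen p i) :=
  ⟨Polynomial.X ^ 2 - Polynomial.C (p i : ℚ), Polynomial.monic_X_pow_sub_C _ two_ne_zero,
    by simp [sqrtGen_sq]⟩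

theorem intermediateField_adjoin_sqrtGen_eq_top :
    IntermediateField.adjoin ℚ (Set.range (sqrtGen p)) = ⊤ := by
  refine eq_top_iff.2 fun x _ => ?_
  have : (x : ℝ) ∈ (IntermediateField.adjoin ℚ (Set.range (sqrtGen p))).toSubfield.map
      (sqrtField p).subtype := by
    refine Subfield.closure_le.2 ?_ x.2
    rintro _ ⟨i, rfl⟩
    exact ⟨sqrtGen p i, IntermediateField.subset_adjoin ℚ _ ⟨i, rfl⟩, rfl⟩
  obtain ⟨y, hy, hyx⟩ := this
  rwa [← Subtype.ext hyx]

theorem algebra_adjoin_sqrtGen_eq_top : Algebra.adjoin ℚ (Set.range (sqrtGen p)) = ⊤ := by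
  rw [← IntermediateField.adjoin_toSubalgebra_of_isAlgebraic,
    intermediateField_adjoin_sqrtGen_eq_top, IntermediateField.top_toSubalgebra]
  rintro _ ⟨i, rfl⟩
  exact (isIntegral_sqrtGen p i).isAlgebraic

def sqrtMonomial (k : ℕ →₀ ℕ) : sqrtField p :=
  k.prod fun i e => sqrtGen p i ^ e

theorem mem_span_sqrtMonomial (x : sqrtField p) :
    x ∈ Submodule.span ℚ (Set.range (sqrtMonomial p)) := by
  have hx : x ∈ Subalgebra.toSubmodule (Algebra.adjoin ℚ (Set.range (sqrtGen p))) := by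
    simp [algebra_adjoin_sqrtGen_eq_top]
  rw [Algebra.adjoin_eq_span] at hx
  refine Submodule.span_mono (fun y hy => ?_) hx
  obtain ⟨k, rfl⟩ := Submonoid.mem_closure_range_iff.1 hy
  exact ⟨k, rfl⟩

theorem sqrtMonomial_mem_fieldRange {k : ℕ →₀ ℕ} (hk : ∀ i, Even (k i)) :
    sqrtMonomial p k ∈ (Rat.castHom (sqrtField p)).fieldRange := by
  refine prod_mem fun i _ => ?_
  obtain ⟨r, hr⟩ := (hk i).two_dvd
  simp only [hr, pow_mul, sqrtGen_sq]
  exact pow_mem (RingHom.mem_fieldRange.2 ⟨(p i : ℚ), by simp⟩) r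

end SqrtField

section Action

variable {p : ℕ → ℕ} {σ : (ℕ →₀ ℤ) → (sqrtField p →+* sqrtField p)}

theorem sigma_sqrtGen
    (hσ : ∀ (g : ℕ →₀ ℤ) (i : ℕ) (y : sqrtField p), (y : ℝ) = Real.sqrt (p i) →
      ((σ g y : sqrtField p) : ℝ) = (-1 : ℝ) ^ (g i) * Real.sqrt (p i))
    (g : ℕ →₀ ℤ) (i : ℕ) : σ g (sqrtGen p i) = (-1) ^ g i * sqrtGen p i :=
  Subtype.ext <| (hσ g i _ rfl).trans <| by
    rw [Subfield.coe_mul, ← Subfield.coe_subtype, map_zpow₀, map_neg, map_one]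
    rfl

theorem ringHom_ext_of_sqrtGen {f f' : sqrtField p →+* sqrtField p}
    (h : ∀ i, f (sqrtGen p i) = f' (sqrtGen p i)) : f = f' := by
  have : f.toRatAlgHom = f'.toRatAlgHom := by
    refine AlgHom.ext_of_adjoin_eq_top (algebra_adjoin_sqrtGen_eq_top p) ?_
    rintro _ ⟨i, rfl⟩
    exact h i
  exact RingHom.ext (AlgHom.congr_fun this)

theorem sigma_eq_id_iff_forall_even (hp : ∀ i, p i ≠ 0)
    (hσ : ∀ g i, σ g (sqrtGen p i) = (-1) ^ g i * sqrtGen p i) (g : ℕ →₀ ℤ) :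
    σ g = RingHom.id _ ↔ ∀ i, Even (g i) := by
  refine ⟨fun h i => ?_, fun h => ringHom_ext_of_sqrtGen fun i => by simp [hσ, (h i).neg_one_zpow]⟩
  have hi := hσ g i
  rw [h, RingHom.id_apply, eq_comm, mul_eq_right₀ (sqrtGen_ne_zero p (hp i))] at hi
  rcases Int.even_or_odd (g i) with he | ho
  · exact he
  · norm_num [ho.neg_one_zpow] at hi

end Action

section Averaging

variable {p : ℕ → ℕ} {σ : (ℕ →₀ ℤ) → (sqrtField p →+* sqrtField p)}

def signFlipSum (σ : (ℕ →₀ ℤ) → (sqrtField p →+* sqrtField p)) (s : Finset ℕ)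
    (x : sqrtField p) : sqrtField p :=
  ∑ T ∈ s.powerset, σ (Finsupp.indicator T fun _ _ => 1) x

theorem signFlipSum_add (s : Finset ℕ) (x y : sqrtField p) :
    signFlipSum σ s (x + y) = signFlipSum σ s x + signFlipSum σ s y := by
  simp only [signFlipSum, map_add, Finset.sum_add_distrib]

theorem signFlipSum_ratCast_mul (s : Finset ℕ) (q : ℚ) (x : sqrtField p) :
    signFlipSum σ s (q * x) = q * signFlipSum σ s x := by
  simp only [signFlipSum, map_mul, map_ratCast, Finset.mul_sum]

theorem signFlipSum_of_forall_eq_self {x : sqrtField p} (hx : ∀ g, σ g x = x) (s : Finset ℕ) :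
    signFlipSum σ s x = 2 ^ s.card * x := by
  simp [signFlipSum, hx, Finset.card_powerset]

theorem signFlipSum_sqrtMonomial (hσ : ∀ g i, σ g (sqrtGen p i) = (-1) ^ g i * sqrtGen p i)
    {s : Finset ℕ} {k : ℕ →₀ ℕ} (hk : k.support ⊆ s) :
    signFlipSum σ s (sqrtMonomial p k) = (∏ i ∈ s, (1 + (-1) ^ k i)) * sqrtMonomial p k := by
  have hflip (T : Finset ℕ) (hT : T ⊆ s) :
      σ (Finsupp.indicator T fun _ _ => 1) (sqrtMonomial p k) =
        (∏ i ∈ T, (-1) ^ k i) * sqrtMonomial p k := by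
    rw [sqrtMonomial, Finsupp.prod_of_support_subset k hk _ (by simp), map_prod]
    simp_rw [map_pow, hσ, mul_pow]
    rw [Finset.prod_mul_distrib, ← Finset.prod_subset hT fun i _ hi => by
      simp [Finsupp.indicator_apply, hi]]
    congr 1
    exact Finset.prod_congr rfl fun i hi => by simp [Finsupp.indicator_apply, hi]
  rw [signFlipSum, Finset.sum_congr rfl fun T hT => hflip T (Finset.mem_powerset.1 hT),
    ← Finset.sum_mul, Finset.prod_one_add]

theorem exists_signFlipSum_mem_fieldRange
    (hσ : ∀ g i, σ g (sqrtGen p i) = (-1) ^ g i * sqrtGen p i) (x : sqrtField p) :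
    ∃ s, signFlipSum σ s x ∈ (Rat.castHom (sqrtField p)).fieldRange := by
  -- Asking for all supersets of `s` lets the two summands of `x + y` share one set of primes.
  suffices ∃ s, ∀ s' ⊇ s, signFlipSum σ s' x ∈ (Rat.castHom (sqrtField p)).fieldRange from
    this.imp fun s hs => hs s subset_rfl
  induction mem_span_sqrtMonomial p x using Submodule.span_induction with
  | mem _ hy =>
    obtain ⟨k, rfl⟩ := hy
    refine ⟨k.support, fun s hs => ?_⟩
    rw [signFlipSum_sqrtMonomial hσ hs]
    by_cases heven : ∀ i, Even (k i)
    · exact mul_mem (prod_mem fun i _ => add_mem (one_mem _) (pow_mem (neg_mem (one_mem _)) _))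
        (sqrtMonomial_mem_fieldRange p heven)
    · obtain ⟨i, hodd⟩ := not_forall.1 heven
      have hi : i ∈ s := hs (Finsupp.mem_support_iff.2 fun h0 => hodd (by simp [h0]))
      rw [Finset.prod_eq_zero hi (by simp [(Nat.not_even_iff_odd.1 hodd).neg_one_pow]), zero_mul]
      exact zero_mem _
  | zero => exact ⟨∅, fun s _ => by simp [signFlipSum]⟩
  | add x y _ _ hx hy =>
    obtain ⟨s, hs⟩ := hx
    obtain ⟨t, ht⟩ := hy
    refine ⟨s ∪ t, fun u hu => ?_⟩
    rw [signFlipSum_add]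
    exact add_mem (hs u (Finset.union_subset_left hu)) (ht u (Finset.union_subset_right hu))
  | smul q x _ hx =>
    obtain ⟨s, hs⟩ := hx
    refine ⟨s, fun u hu => ?_⟩
    rw [Rat.smul_def, signFlipSum_ratCast_mul]
    exact mul_mem (RingHom.mem_fieldRange.2 ⟨q, rfl⟩) (hs u hu)

theorem forall_sigma_eq_self_iff
    (hσ : ∀ g i, σ g (sqrtGen p i) = (-1) ^ g i * sqrtGen p i) (x : sqrtField p) :
    (∀ g, σ g x = x) ↔ ∃ q : ℚ, x = q := by
  refine ⟨fun hx => ?_, by rintro ⟨q, rfl⟩ g; exact map_ratCast _ q⟩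
  obtain ⟨s, hs⟩ := exists_signFlipSum_mem_fieldRange hσ x
  rw [signFlipSum_of_forall_eq_self hx] at hs
  have h2 : (2 : sqrtField p) ^ s.card ∈ (Rat.castHom (sqrtField p)).fieldRange :=
    pow_mem (RingHom.mem_fieldRange.2 ⟨2, by simp⟩) _
  have hx := mul_mem (inv_mem h2) hs
  rw [inv_mul_cancel_left₀ (pow_ne_zero _ two_ne_zero)] at hx
  obtain ⟨q, hq⟩ := RingHom.mem_fieldRange.1 hx
  exact ⟨q, hq.symm⟩

end Averaging

theorem stmt_17_general (p : ℕ → ℕ) (hp : ∀ i, (p i).Prime)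
    (σ : (ℕ →₀ ℤ) → (sqrtField p →+* sqrtField p))
    (hσsqrt : ∀ (g : ℕ →₀ ℤ) (i : ℕ) (y : sqrtField p), (y : ℝ) = Real.sqrt (p i) →
      ((σ g y : sqrtField p) : ℝ) = (-1 : ℝ) ^ (g i) * Real.sqrt (p i)) :
    {α : MalcevNeumann p | ∀ β, tmul p σ α β = tmul p σ β α} =
    {α : MalcevNeumann p | ∀ g ∈ α.support,
      (∃ h : ℕ →₀ ℤ, ofLex g = h + h) ∧ ∃ q : ℚ, α.coeff g = (q : sqrtField p)} := by
  have hσ := sigma_sqrtGen hσsqrt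
  ext α
  refine (tmul_comm_iff α).trans <| forall₂_congr fun g _ => and_congr ?_ ?_
  · rw [sigma_eq_id_iff_forall_even (fun i => (hp i).ne_zero) hσ, ← Finsupp.even_iff_forall_even]
    rfl
  · exact forall_sigma_eq_self_iff hσ _

/-- The center of the Mal'cev–Neumann division ring `D = K((G))`, where `G = ⊕ℤ` acts on
`K = ℚ(√p₀, √p₁, …)` by `g • √pᵢ = (-1)^{gᵢ} √pᵢ`, equals `ℚ((H))`, where `H` is the
subgroup of squares of `G`: an element commutes with all of `D` iff its support consists
of squares and all its coefficients are rational. -/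
theorem stmt_17 (p : ℕ → ℕ) (hp : ∀ i, (p i).Prime) (hmono : StrictMono p)
    (σ : (ℕ →₀ ℤ) → (sqrtField p →+* sqrtField p))
    (hσ0 : σ 0 = RingHom.id _)
    (hσadd : ∀ g h, σ (g + h) = (σ g).comp (σ h))
    (hσQ : ∀ (g : ℕ →₀ ℤ) (q : ℚ), σ g (q : sqrtField p) = (q : sqrtField p))
    (hσsqrt : ∀ (g : ℕ →₀ ℤ) (i : ℕ) (y : sqrtField p), (y : ℝ) = Real.sqrt (p i) →
      ((σ g y : sqrtField p) : ℝ) = (-1 : ℝ) ^ (g i) * Real.sqrt (p i)) :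
    {α : MalcevNeumann p | ∀ β, tmul p σ α β = tmul p σ β α} =
    {α : MalcevNeumann p | ∀ g ∈ α.support,
      (∃ h : ℕ →₀ ℤ, ofLex g = h + h) ∧ ∃ q : ℚ, α.coeff g = (q : sqrtField p)} :=
  stmt_17_general p hp σ hσsqrt

end
end
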